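/- arXiv:2508.12547 — 2 statements merged into one kernel-verified Lean document; each statement's English description precedes it below -/
import Mathlib

section
/- Let n ≥ 1, C > 0, and Φ : ℝ → ℝ differentiable with (Φ'(u) − Φ'(v))(u − v) ≥ −C|u−v|² and |Φ'(u)| ≤ C(1+|u|ⁿ) for all u,v ∈ ℝ. Then there exists C' > 0 such that for all u,v ∈ ℝ and all probability measures μ, ν on ℝ with finite second moments: (−Φ'(u)Var[μ] + Φ'(v)Var[ν])·(u−v) ≤ C'(∫x²dμ + ∫x²dν)|u−v|² + C'(1+|u|^{2n})·W₂(μ,ν)². -/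
/-!
For a coupling `π` of `μ` and `ν`, `√Var` is the `L²(π)`-distance of a coordinate to its mean, so
Minkowski's inequality gives `|√Var[μ] - √Var[ν]| ≤ ‖p.1 - p.2‖_{L²(π)}`, hence
`|√Var[μ] - √Var[ν]| ≤ W₂(μ, ν)`. Then split
`(-Φ'(u) Var[μ] + Φ'(v) Var[ν])(u - v)` as
`Φ'(u)(Var[ν] - Var[μ])(u - v) - (Φ'(u) - Φ'(v))(u - v) Var[ν]`: the second term is bounded
by semiconvexity, the first by the growth of `Φ'`, the factorisation
`Var[ν] - Var[μ] = (√Var[ν] - √Var[μ])(√Var[ν] + √Var[μ])` and AM-GM.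
-/

open MeasureTheory

/-- The mean of a measure on ℝ. -/
noncomputable def meanM (μ : Measure ℝ) : ℝ := ∫ x, x ∂μ

/-- The variance of a measure on ℝ. -/
noncomputable def varM (μ : Measure ℝ) : ℝ := ∫ x, (x - meanM μ) ^ 2 ∂μ

/-- The L²-Wasserstein distance between two probability measures on ℝ. -/
noncomputable def W2 (μ ν : Measure ℝ) : ℝ :=
  sInf {r : ℝ | ∃ π : Measure (ℝ × ℝ), IsProbabilityMeasure π ∧
    π.map Prod.fst = μ ∧ π.map Prod.snd = ν ∧
    r = Real.sqrt (∫ p, (p.1 - p.2) ^ 2 ∂π)}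

open ProbabilityTheory

section L2

variable {Ω : Type*} [MeasurableSpace Ω] {μ : Measure Ω} {X Y : Ω → ℝ}

lemma MeasureTheory.MemLp.sqrt_integral_sq_eq_norm_toLp (hX : MemLp X 2 μ) :
    √(∫ ω, X ω ^ 2 ∂μ) = ‖hX.toLp X‖ := by
  rw [Lp.norm_toLp, hX.eLpNorm_eq_integral_rpow_norm two_ne_zero ENNReal.ofNat_ne_top,
    ENNReal.toReal_ofReal (by positivity), Real.sqrt_eq_rpow]
  simp

lemma sqrt_integral_add_sq_le (hX : MemLp X 2 μ) (hY : MemLp Y 2 μ) :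
    √(∫ ω, (X ω + Y ω) ^ 2 ∂μ) ≤ √(∫ ω, X ω ^ 2 ∂μ) + √(∫ ω, Y ω ^ 2 ∂μ) := by
  rw [show (fun ω ↦ (X ω + Y ω) ^ 2) = fun ω ↦ (X + Y) ω ^ 2 from rfl,
    (hX.add hY).sqrt_integral_sq_eq_norm_toLp, hX.sqrt_integral_sq_eq_norm_toLp,
    hY.sqrt_integral_sq_eq_norm_toLp, MemLp.toLp_add hX hY]
  exact norm_add_le _ _

end L2

section Variance

variable {Ω : Type*} [MeasurableSpace Ω] {μ : Measure Ω} [IsProbabilityMeasure μ] {X Y : Ω → ℝ}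

lemma variance_le_integral_sub_sq (hX : AEStronglyMeasurable X μ) (c : ℝ) :
    Var[X; μ] ≤ ∫ ω, (X ω - c) ^ 2 ∂μ := by
  rw [← variance_sub_const hX c]
  exact variance_le_expectation_sq (by fun_prop)

lemma sqrt_variance_le_sqrt_variance_add (hX : AEStronglyMeasurable X μ) (hY : MemLp Y 2 μ)
    (hXY : MemLp (fun ω ↦ X ω - Y ω) 2 μ) :
    √Var[X; μ] ≤ √Var[Y; μ] + √(∫ ω, (X ω - Y ω) ^ 2 ∂μ) := by
  have hYc : MemLp (fun ω ↦ Y ω - μ[Y]) 2 μ := hY.sub (memLp_const _)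
  calc √Var[X; μ] ≤ √(∫ ω, ((X ω - Y ω) + (Y ω - μ[Y])) ^ 2 ∂μ) := by
        gcongr
        simpa using variance_le_integral_sub_sq hX μ[Y]
    _ ≤ √(∫ ω, (X ω - Y ω) ^ 2 ∂μ) + √(∫ ω, (Y ω - μ[Y]) ^ 2 ∂μ) :=
        sqrt_integral_add_sq_le hXY hYc
    _ = √Var[Y; μ] + √(∫ ω, (X ω - Y ω) ^ 2 ∂μ) := by
        rw [variance_eq_integral hY.aemeasurable, add_comm]

lemma abs_sqrt_variance_sub_sqrt_variance_le (hX : MemLp X 2 μ) (hY : MemLp Y 2 μ) :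
    |√Var[X; μ] - √Var[Y; μ]| ≤ √(∫ ω, (X ω - Y ω) ^ 2 ∂μ) := by
  have hXY : MemLp (fun ω ↦ X ω - Y ω) 2 μ := hX.sub hY
  have hYX : MemLp (fun ω ↦ Y ω - X ω) 2 μ := hY.sub hX
  have h_symm : ∫ ω, (Y ω - X ω) ^ 2 ∂μ = ∫ ω, (X ω - Y ω) ^ 2 ∂μ := by
    congr 1 with ω; ring
  rw [abs_sub_le_iff]
  constructor
  · linarith [sqrt_variance_le_sqrt_variance_add hX.1 hY hXY]
  · linarith [h_symm ▸ sqrt_variance_le_sqrt_variance_add hY.1 hX hYX]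

end Variance

lemma varM_eq_variance (μ : Measure ℝ) : varM μ = Var[id; μ] := by
  rw [variance_eq_integral aemeasurable_id]
  rfl

lemma varM_le_integral_sq (μ : Measure ℝ) [IsProbabilityMeasure μ] :
    varM μ ≤ ∫ x, x ^ 2 ∂μ :=
  varM_eq_variance μ ▸ variance_le_expectation_sq aestronglyMeasurable_id

lemma abs_sqrt_varM_sub_sqrt_varM_le_of_coupling {μ ν : Measure ℝ} (hμ : MemLp id 2 μ)
    (hν : MemLp id 2 ν) (π : Measure (ℝ × ℝ)) [IsProbabilityMeasure π]
    (hπμ : π.map Prod.fst = μ) (hπν : π.map Prod.snd = ν) :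
    |√(varM μ) - √(varM ν)| ≤ √(∫ p, (p.1 - p.2) ^ 2 ∂π) := by
  subst hπμ hπν
  rw [varM_eq_variance, varM_eq_variance, variance_id_map measurable_fst.aemeasurable,
    variance_id_map measurable_snd.aemeasurable]
  rw [memLp_map_measure_iff aestronglyMeasurable_id measurable_fst.aemeasurable] at hμ
  rw [memLp_map_measure_iff aestronglyMeasurable_id measurable_snd.aemeasurable] at hν
  exact abs_sqrt_variance_sub_sqrt_variance_le hμ hν

lemma abs_sqrt_varM_sub_sqrt_varM_le_W2 {μ ν : Measure ℝ} [IsProbabilityMeasure μ]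
    [IsProbabilityMeasure ν] (hμ : MemLp id 2 μ) (hν : MemLp id 2 ν) :
    |√(varM μ) - √(varM ν)| ≤ W2 μ ν := by
  refine le_csInf ⟨_, μ.prod ν, inferInstance, by simp, by simp, rfl⟩ ?_
  rintro r ⟨π, hπ, hπμ, hπν, rfl⟩
  exact abs_sqrt_varM_sub_sqrt_varM_le_of_coupling hμ hν π hπμ hπν

lemma neg_mul_sq_add_mul_sq_mul_sub_le {C a b u v s t A B W P : ℝ} (hC : 0 ≤ C)
    (ha : |a| ≤ C * (1 + P)) (hab : (a - b) * (u - v) ≥ -C * |u - v| ^ 2)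
    (hs : 0 ≤ s) (ht : 0 ≤ t) (hsA : s ^ 2 ≤ A) (htB : t ^ 2 ≤ B) (hW : |s - t| ≤ W) :
    (-a * s ^ 2 + b * t ^ 2) * (u - v) ≤
      (C + 1) ^ 2 * (A + B) * |u - v| ^ 2 + (C + 1) ^ 2 * (1 + P ^ 2) * W ^ 2 := by
  set D := |u - v|
  have h_drift : a * (t ^ 2 - s ^ 2) * (u - v) ≤ (C * (1 + P) * W) * ((s + t) * D) :=
    calc a * (t ^ 2 - s ^ 2) * (u - v) ≤ |a| * |s - t| * ((s + t) * D) := by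
          rw [← abs_sub_comm t s, ← abs_of_nonneg (add_nonneg hs ht), ← abs_mul, ← abs_mul,
            ← abs_mul]
          exact (le_of_eq (by ring)).trans (le_abs_self _)
      _ ≤ (C * (1 + P)) * W * ((s + t) * D) := by gcongr; exact (abs_nonneg a).trans ha
  have h_mono : -((a - b) * (u - v)) * t ^ 2 ≤ C * D ^ 2 * B := by
    have : -((a - b) * (u - v)) ≤ C * D ^ 2 := by linarith
    calc _ ≤ C * D ^ 2 * t ^ 2 := by gcongr
      _ ≤ C * D ^ 2 * B := by gcongr
  -- AM-GM on the drift term, then `(x + y)² ≤ 2(x² + y²)` on both factors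
  have h_amgm :
      (C * (1 + P) * W) * ((s + t) * D) ≤ C ^ 2 * ((1 + P ^ 2) * W ^ 2) + (A + B) * D ^ 2 := by
    nlinarith [sq_nonneg (C * (1 + P) * W - (s + t) * D), sq_nonneg (C * W * (1 - P)),
      sq_nonneg (D * (s - t)), mul_le_mul_of_nonneg_right (add_le_add hsA htB) (sq_nonneg D)]
  have hA : 0 ≤ A := (sq_nonneg s).trans hsA
  have hX : 0 ≤ (A + B) * D ^ 2 := by have := (sq_nonneg t).trans htB; positivity
  have hY : 0 ≤ (1 + P ^ 2) * W ^ 2 := by positivity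
  calc (-a * s ^ 2 + b * t ^ 2) * (u - v)
      = a * (t ^ 2 - s ^ 2) * (u - v) + -((a - b) * (u - v)) * t ^ 2 := by ring
    _ ≤ C ^ 2 * ((1 + P ^ 2) * W ^ 2) + (A + B) * D ^ 2 + C * D ^ 2 * B := by linarith
    _ ≤ (C + 1) ^ 2 * (A + B) * D ^ 2 + (C + 1) ^ 2 * (1 + P ^ 2) * W ^ 2 := by
        nlinarith [mul_nonneg (mul_nonneg hC hA) (sq_nonneg D)]

theorem stmt6_general (n : ℕ) (C : ℝ) (hC : 0 < C) (Φ : ℝ → ℝ)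
    (hmono : ∀ u v : ℝ, (deriv Φ u - deriv Φ v) * (u - v) ≥ -C * |u - v| ^ 2)
    (hgrowth : ∀ u : ℝ, |deriv Φ u| ≤ C * (1 + |u| ^ n)) :
    ∃ C' > 0, ∀ (u v : ℝ) (μ ν : Measure ℝ),
      IsProbabilityMeasure μ → IsProbabilityMeasure ν →
      Integrable (fun x => x ^ 2) μ → Integrable (fun x => x ^ 2) ν →
      (-(deriv Φ u) * varM μ + deriv Φ v * varM ν) * (u - v) ≤
        C' * ((∫ x, x ^ 2 ∂μ) + ∫ x, x ^ 2 ∂ν) * |u - v| ^ 2 +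
          C' * (1 + |u| ^ (2 * n)) * W2 μ ν ^ 2 := by
  refine ⟨(C + 1) ^ 2, by positivity, fun u v μ ν _ _ hμ2 hν2 ↦ ?_⟩
  have hμ : MemLp id 2 μ := (memLp_two_iff_integrable_sq aestronglyMeasurable_id).2 hμ2
  have hν : MemLp id 2 ν := (memLp_two_iff_integrable_sq aestronglyMeasurable_id).2 hν2
  have hsμ : √(varM μ) ^ 2 = varM μ := Real.sq_sqrt (varM_eq_variance μ ▸ variance_nonneg _ _)
  have hsν : √(varM ν) ^ 2 = varM ν := Real.sq_sqrt (varM_eq_variance ν ▸ variance_nonneg _ _)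
  rw [← hsμ, ← hsν, pow_mul']
  exact neg_mul_sq_add_mul_sq_mul_sub_le hC.le (hgrowth u) (hmono u v) (Real.sqrt_nonneg _)
    (Real.sqrt_nonneg _) (hsμ.trans_le (varM_le_integral_sq μ))
    (hsν.trans_le (varM_le_integral_sq ν)) (abs_sqrt_varM_sub_sqrt_varM_le_W2 hμ hν)

theorem stmt6 (n : ℕ) (hn : 1 ≤ n) (C : ℝ) (hC : 0 < C) (Φ : ℝ → ℝ)
    (hΦ : Differentiable ℝ Φ)
    (hmono : ∀ u v : ℝ, (deriv Φ u - deriv Φ v) * (u - v) ≥ -C * |u - v| ^ 2)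
    (hgrowth : ∀ u : ℝ, |deriv Φ u| ≤ C * (1 + |u| ^ n)) :
    ∃ C' > 0, ∀ (u v : ℝ) (μ ν : Measure ℝ),
      IsProbabilityMeasure μ → IsProbabilityMeasure ν →
      Integrable (fun x => x ^ 2) μ → Integrable (fun x => x ^ 2) ν →
      (-(deriv Φ u) * varM μ + deriv Φ v * varM ν) * (u - v) ≤
        C' * ((∫ x, x ^ 2 ∂μ) + ∫ x, x ^ 2 ∂ν) * |u - v| ^ 2 +
          C' * (1 + |u| ^ (2 * n)) * W2 μ ν ^ 2 :=
  stmt6_general n C hC Φ hmono hgrowth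
end

section
/- Let k ≥ 1, q ≥ 2 be natural numbers and set A₂(u,μ) := −u^{2k−1}∫y^{2q−2}dμ(y). There exists C > 0 such that for all u, v ∈ ℝ and all probability measures μ, ν on ℝ with finite (4q−6)-th moments: (A₂(u,μ) − A₂(v,ν))·(u−v) ≤ C(∫|y|^{4q−6}dμ + ∫|y|^{4q−6}dν)·|u−v|² + C|v|^{4k−2}·W₂(μ,ν)². -/
/-!
With `a = 2k-1` and `m = 2q-2`,
`A₂(u,μ) - A₂(v,ν) = -(u^a - v^a) ∫ y^m dμ + v^a (∫ y^m dν - ∫ y^m dμ)`.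
Since `a` is odd and `m` even, the first part times `u - v` is nonpositive. For the second,
`|x^m - y^m| ≤ m |x - y| max(|x|,|y|)^{m-1}` integrated against any coupling of `μ` and `ν`, with
Cauchy–Schwarz, shows that `∫ y^m` is Lipschitz in `W₂` with constant
`m (∫|y|^{2m-2} dμ + ∫|y|^{2m-2} dν)^{1/2}`, where `2m-2 = 4q-6`; Young's inequality then splits
the product `|v|^a W₂ · |u - v|`.
-/

open MeasureTheory

lemma abs_pow_le_one_add_abs_pow (x : ℝ) {i j : ℕ} (hij : i ≤ j) : |x| ^ i ≤ 1 + |x| ^ j := by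
  rcases le_total |x| 1 with hx | hx
  · linarith [pow_le_one₀ (abs_nonneg x) hx (n := i), pow_nonneg (abs_nonneg x) j]
  · linarith [pow_le_pow_right₀ hx hij]

section Integrability

variable {α : Type*} [MeasurableSpace α] {μ : Measure α}

lemma integrable_pow_of_integrable_abs_pow [IsFiniteMeasure μ] {f : α → ℝ} {i j : ℕ}
    (hij : i ≤ j) (hf : AEStronglyMeasurable f μ) (hfj : Integrable (fun x => |f x| ^ j) μ) :
    Integrable (fun x => f x ^ i) μ :=
  ((integrable_const 1).add hfj).mono' (hf.pow i) <| .of_forall fun x => by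
    simpa only [norm_pow, Real.norm_eq_abs, Pi.add_apply] using
      abs_pow_le_one_add_abs_pow (f x) hij

lemma memLp_two_of_integrable_abs_pow [IsFiniteMeasure μ] {f : α → ℝ} {j : ℕ} (hj : 2 ≤ j)
    (hf : AEStronglyMeasurable f μ) (hfj : Integrable (fun x => |f x| ^ j) μ) : MemLp f 2 μ :=
  (memLp_two_iff_integrable_sq hf).2 (integrable_pow_of_integrable_abs_pow hj hf hfj)

lemma integral_mul_le_sqrt_mul_sqrt {f g : α → ℝ} (hf0 : 0 ≤ᵐ[μ] f) (hg0 : 0 ≤ᵐ[μ] g)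
    (hf : MemLp f 2 μ) (hg : MemLp g 2 μ) :
    ∫ x, f x * g x ∂μ ≤ √(∫ x, f x ^ 2 ∂μ) * √(∫ x, g x ^ 2 ∂μ) := by
  have h := integral_mul_le_Lp_mul_Lq_of_nonneg Real.HolderConjugate.two_two hf0 hg0
    (by simpa using hf) (by simpa using hg)
  simpa only [Real.sqrt_eq_rpow, Real.rpow_two, one_div] using h

end Integrability

lemma abs_integral_pow_sub_integral_pow_le {Ω : Type*} [MeasurableSpace Ω] {P : Measure Ω}
    [IsFiniteMeasure P] {X Y : Ω → ℝ} (hX : Measurable X) (hY : Measurable Y) {m : ℕ}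
    (hm : 2 ≤ m) (hXm : Integrable (fun ω => |X ω| ^ (2 * (m - 1))) P)
    (hYm : Integrable (fun ω => |Y ω| ^ (2 * (m - 1))) P) :
    |∫ ω, X ω ^ m ∂P - ∫ ω, Y ω ^ m ∂P| ≤
      m * √(∫ ω, |X ω| ^ (2 * (m - 1)) ∂P + ∫ ω, |Y ω| ^ (2 * (m - 1)) ∂P) *
        √(∫ ω, (X ω - Y ω) ^ 2 ∂P) := by
  set F : Ω → ℝ := fun ω => max |X ω| |Y ω| ^ (m - 1)
  set G : Ω → ℝ := fun ω => |X ω - Y ω|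
  have hF_sq (ω : Ω) : F ω ^ 2 ≤ |X ω| ^ (2 * (m - 1)) + |Y ω| ^ (2 * (m - 1)) := by
    simp only [F, ← pow_mul, mul_comm (m - 1)]
    rcases max_choice |X ω| |Y ω| with h | h <;> rw [h] <;>
      linarith [pow_nonneg (abs_nonneg (X ω)) (2 * (m - 1)),
        pow_nonneg (abs_nonneg (Y ω)) (2 * (m - 1))]
  have hF : MemLp F 2 P := by
    refine (memLp_two_iff_integrable_sq (by fun_prop)).2 <| (hXm.add hYm).mono' (by fun_prop) ?_
    refine .of_forall fun ω => ?_
    simpa only [Real.norm_of_nonneg (sq_nonneg (F ω)), Pi.add_apply] using hF_sq ω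
  have hG : MemLp G 2 P :=
    ((memLp_two_of_integrable_abs_pow (by omega) hX.aestronglyMeasurable hXm).sub
      (memLp_two_of_integrable_abs_pow (by omega) hY.aestronglyMeasurable hYm)).norm
  have hXi := integrable_pow_of_integrable_abs_pow (i := m) (by omega) hX.aestronglyMeasurable hXm
  have hYi := integrable_pow_of_integrable_abs_pow (i := m) (by omega) hY.aestronglyMeasurable hYm
  have hFG : Integrable (fun ω => F ω * G ω) P := hF.integrable_mul hG
  calc |∫ ω, X ω ^ m ∂P - ∫ ω, Y ω ^ m ∂P|
      = |∫ ω, (X ω ^ m - Y ω ^ m) ∂P| := by rw [integral_sub hXi hYi]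
    _ ≤ ∫ ω, |X ω ^ m - Y ω ^ m| ∂P := abs_integral_le_integral_abs
    _ ≤ ∫ ω, m * (F ω * G ω) ∂P := by
        refine integral_mono (hXi.sub hYi).abs (hFG.const_mul _) fun ω => ?_
        have := abs_pow_sub_pow_le (X ω) (Y ω) m
        simp only [F, G]
        linarith
    _ = m * ∫ ω, F ω * G ω ∂P := integral_const_mul _ _
    _ ≤ m * (√(∫ ω, F ω ^ 2 ∂P) * √(∫ ω, G ω ^ 2 ∂P)) := by
        gcongr
        exact integral_mul_le_sqrt_mul_sqrt (.of_forall fun _ => by positivity)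
          (.of_forall fun _ => by positivity) hF hG
    _ ≤ m * √(∫ ω, |X ω| ^ (2 * (m - 1)) ∂P + ∫ ω, |Y ω| ^ (2 * (m - 1)) ∂P) *
          √(∫ ω, (X ω - Y ω) ^ 2 ∂P) := by
        rw [mul_assoc, ← integral_add hXm hYm]
        simp only [G, sq_abs]
        gcongr
        exacts [hF.integrable_sq, hXm.add hYm, hF_sq]

lemma le_mul_W2_of_forall_coupling {μ ν : Measure ℝ} [IsProbabilityMeasure μ] [IsProbabilityMeasure ν] {x c : ℝ}
    (hc : 0 ≤ c) (h : ∀ π : Measure (ℝ × ℝ), IsProbabilityMeasure π → π.map Prod.fst = μ →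
      π.map Prod.snd = ν → x ≤ c * √(∫ p, (p.1 - p.2) ^ 2 ∂π)) :
    x ≤ c * W2 μ ν := by
  rw [W2, ← smul_eq_mul, ← Real.sInf_smul_of_nonneg hc]
  refine le_csInf ⟨_, Set.smul_mem_smul_set ⟨μ.prod ν, inferInstance, by simp, by simp, rfl⟩⟩ ?_
  rintro _ ⟨_, ⟨π, hπ, hfst, hsnd, rfl⟩, rfl⟩
  exact h π hπ hfst hsnd

lemma abs_integral_pow_sub_integral_pow_le_W2 {μ ν : Measure ℝ} [IsProbabilityMeasure μ]
    [IsProbabilityMeasure ν] {m : ℕ} (hm : 2 ≤ m)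
    (hμ : Integrable (fun y => |y| ^ (2 * (m - 1))) μ)
    (hν : Integrable (fun y => |y| ^ (2 * (m - 1))) ν) :
    |∫ y, y ^ m ∂μ - ∫ y, y ^ m ∂ν| ≤
      m * √(∫ y, |y| ^ (2 * (m - 1)) ∂μ + ∫ y, |y| ^ (2 * (m - 1)) ∂ν) * W2 μ ν := by
  refine le_mul_W2_of_forall_coupling (by positivity) fun π hπ hfst hsnd => ?_
  subst hfst hsnd
  rw [integrable_map_measure (by fun_prop) (by fun_prop)] at hμ hν
  have hmap : ∀ {f : ℝ × ℝ → ℝ} (g : ℝ → ℝ), Measurable f → Measurable g →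
      ∫ y, g y ∂π.map f = ∫ p, g (f p) ∂π := fun _ hf hg =>
    integral_map hf.aemeasurable hg.aestronglyMeasurable
  rw [hmap _ measurable_fst (by fun_prop), hmap _ measurable_snd (by fun_prop),
    hmap _ measurable_fst (by fun_prop), hmap _ measurable_snd (by fun_prop)]
  exact abs_integral_pow_sub_integral_pow_le measurable_fst measurable_snd hm hμ hν

lemma Odd.sub_mul_sub_nonneg {n : ℕ} (hn : Odd n) (u v : ℝ) : 0 ≤ (u ^ n - v ^ n) * (u - v) := by
  rcases le_total u v with h | h
  · exact mul_nonneg_of_nonpos_of_nonpos (sub_nonpos.2 (hn.pow_le_pow.2 h)) (sub_nonpos.2 h)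
  · exact mul_nonneg (sub_nonneg.2 (hn.pow_le_pow.2 h)) (sub_nonneg.2 h)

theorem stmt9 (k q : ℕ) (hk : 1 ≤ k) (hq : 2 ≤ q) :
    ∃ C > 0, ∀ (u v : ℝ) (μ ν : Measure ℝ),
      IsProbabilityMeasure μ → IsProbabilityMeasure ν →
      Integrable (fun y => |y| ^ (4 * q - 6)) μ →
      Integrable (fun y => |y| ^ (4 * q - 6)) ν →
      ((-(u ^ (2 * k - 1)) * ∫ y, y ^ (2 * q - 2) ∂μ) -
          (-(v ^ (2 * k - 1)) * ∫ y, y ^ (2 * q - 2) ∂ν)) * (u - v) ≤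
        C * ((∫ y, |y| ^ (4 * q - 6) ∂μ) + ∫ y, |y| ^ (4 * q - 6) ∂ν) * |u - v| ^ 2 +
          C * |v| ^ (4 * k - 2) * W2 μ ν ^ 2 := by
  refine ⟨q, by positivity, fun u v μ ν _ _ hμ hν => ?_⟩
  set m := 2 * q - 2
  set a := 2 * k - 1
  rw [show 4 * q - 6 = 2 * (m - 1) by omega] at hμ hν ⊢
  rw [show 4 * k - 2 = 2 * a by omega]
  set S := ∫ y, |y| ^ (2 * (m - 1)) ∂μ + ∫ y, |y| ^ (2 * (m - 1)) ∂ν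
  set Iμ := ∫ y, y ^ m ∂μ
  set Iν := ∫ y, y ^ m ∂ν
  have hmono : 0 ≤ (u ^ a - v ^ a) * (u - v) := Odd.sub_mul_sub_nonneg ⟨k - 1, by omega⟩ u v
  have hIμ : 0 ≤ Iμ := integral_nonneg fun y => Even.pow_nonneg ⟨q - 1, by omega⟩ y
  have hmoment : |Iμ - Iν| ≤ m * √S * W2 μ ν :=
    abs_integral_pow_sub_integral_pow_le_W2 (by omega) hμ hν
  have hyoung := two_mul_le_add_sq (√S * |u - v|) (|v| ^ a * W2 μ ν)
  have hmq : (m : ℝ) / 2 ≤ q := by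
    rw [div_le_iff₀ two_pos]; exact_mod_cast (by omega : m ≤ q * 2)
  calc (-(u ^ a) * Iμ - -(v ^ a) * Iν) * (u - v)
      = -((u ^ a - v ^ a) * (u - v)) * Iμ - v ^ a * (Iμ - Iν) * (u - v) := by ring
    _ ≤ |v| ^ a * |Iμ - Iν| * |u - v| := by
        rw [← abs_pow, ← abs_mul, ← abs_mul]
        nlinarith [neg_abs_le (v ^ a * (Iμ - Iν) * (u - v))]
    _ ≤ |v| ^ a * (m * √S * W2 μ ν) * |u - v| := by gcongr
    _ = m / 2 * (2 * (√S * |u - v|) * (|v| ^ a * W2 μ ν)) := by ring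
    _ ≤ m / 2 * ((√S * |u - v|) ^ 2 + (|v| ^ a * W2 μ ν) ^ 2) := by gcongr
    _ = m / 2 * (S * |u - v| ^ 2 + |v| ^ (2 * a) * W2 μ ν ^ 2) := by
        rw [mul_pow, mul_pow, Real.sq_sqrt (by positivity), ← pow_mul, mul_comm a]
    _ ≤ q * (S * |u - v| ^ 2 + |v| ^ (2 * a) * W2 μ ν ^ 2) := by gcongr
    _ = q * S * |u - v| ^ 2 + q * |v| ^ (2 * a) * W2 μ ν ^ 2 := by ring
end
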